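/- arXiv:2211.14593 — 2 statements merged into one kernel-verified Lean document; each statement's English description precedes it below -/
import Mathlib

section
/- Positive semidefiniteness of FBDF quadrature weights: let $(\omega_k^{(\gamma)})$ be the Taylor coefficients of $(1-x)^{\gamma}$ for $\gamma \in (-1,1)$ (the first-order backward difference generating function). Then for every $n \ge 1$ and every vector $(u^0, \dots, u^{n-1}) \in \mathbb{R}^n$, $\sum_{k=0}^{n-1} u^k \sum_{j=0}^{k} \omega_{k-j}^{(\gamma)} u^j \ge 0$. -/
/-!
For `0 ≤ γ ≤ 1` the coefficients satisfy `ω₀ = 1`, `ωₖ ≤ 0` for `k ≥ 1`, and their partial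
sums `∑_{m ≤ M} ω_m^{(γ)} = ω_M^{(γ - 1)}` (coefficients of `(1 - x)^{γ - 1}`) are nonnegative,
so the symmetric part of the Toeplitz matrix is diagonally dominant. For `-1 ≤ γ < 0`, since
`(1 - x)^γ (1 - x)^{-γ} = 1`, the substitution `v = L_γ u`, `u = L_{-γ} v` turns the form for
`γ` into the form for `-γ`.
-/

/-- Coefficients of `(1-x)^γ`: `ω_k = (-1)^k (γ choose k)` with the generalized
binomial coefficient `(γ choose k) = (∏_{i<k}(γ-i))/k!`. -/
noncomputable def omegaBD (γ : ℝ) (k : ℕ) : ℝ :=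
  (-1) ^ k * ((∏ i ∈ Finset.range k, (γ - i)) / (Nat.factorial k))

open Finset PowerSeries

section ToeplitzForm

variable {R : Type*}

def lowerToeplitzForm [CommSemiring R] (c : ℕ → R) (n : ℕ) (u : ℕ → R) : R :=
  ∑ k ∈ range n, u k * ∑ j ∈ range (k + 1), c (k - j) * u j

theorem sum_range_succ_sub_mul_eq_coeff_mk_mul [CommSemiring R] (c u : ℕ → R) (k : ℕ) :
    ∑ j ∈ range (k + 1), c (k - j) * u j = coeff k (mk c * mk u) := by
  rw [mul_comm, coeff_mul,
    Nat.sum_antidiagonal_eq_sum_range_succ fun i j ↦ coeff i (mk u) * coeff j (mk c)]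
  simp [mul_comm]

/-- With `v = A u` and `B = A⁻¹`, `uᵀ A u = u ⬝ v = vᵀ B v`. -/
theorem lowerToeplitzForm_eq_of_mk_mul_mk_eq_one [CommSemiring R] {a b : ℕ → R}
    (hab : mk a * mk b = 1) (n : ℕ) (u : ℕ → R) :
    lowerToeplitzForm a n u = lowerToeplitzForm b n fun k ↦ coeff k (mk a * mk u) := by
  have hinv : mk b * mk (fun k ↦ coeff k (mk a * mk u)) = mk u := by
    rw [show mk (fun k ↦ coeff k (mk a * mk u)) = mk a * mk u from ext fun _ ↦ coeff_mk _ _,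
      ← mul_assoc, mul_comm (mk b), hab, one_mul]
  simp only [lowerToeplitzForm, sum_range_succ_sub_mul_eq_coeff_mk_mul, hinv, coeff_mk]
  exact sum_congr rfl fun k _ ↦ mul_comm _ _

theorem sum_range_sum_range_sub_mul_sq_add_sq [CommSemiring R] (c u : ℕ → R) (n : ℕ) :
    ∑ k ∈ range n, ∑ j ∈ range k, c (k - j) * (u j ^ 2 + u k ^ 2) =
      ∑ k ∈ range n, u k ^ 2 *
        (∑ m ∈ range k, c (m + 1) + ∑ m ∈ range (n - 1 - k), c (m + 1)) := by
  have hlower : ∀ k, ∑ j ∈ range k, c (k - j) = ∑ m ∈ range k, c (m + 1) := fun k ↦ by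
    rw [← sum_range_reflect]
    exact sum_congr rfl fun j hj ↦ by congr 1; have := mem_range.mp hj; omega
  have hupper : ∀ j < n,
      ∑ k ∈ Ico (j + 1) n, c (k - j) = ∑ m ∈ range (n - 1 - j), c (m + 1) := fun j hj ↦ by
    rw [sum_Ico_eq_sum_range, show n - (j + 1) = n - 1 - j by omega]
    exact sum_congr rfl fun m _ ↦ by congr 1; omega
  have hswap : ∑ k ∈ range n, ∑ j ∈ range k, c (k - j) * u j ^ 2 =
      ∑ j ∈ range n, ∑ k ∈ Ico (j + 1) n, c (k - j) * u j ^ 2 := by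
    simp only [range_eq_Ico, sum_Ico_Ico_comm']
  simp only [mul_add, sum_add_distrib, hswap, ← sum_mul, hlower]
  rw [add_comm, ← sum_add_distrib, ← sum_add_distrib]
  refine sum_congr rfl fun k hk ↦ ?_
  rw [hupper k (mem_range.mp hk)]
  ring

variable [CommRing R] [LinearOrder R] [IsStrictOrderedRing R]

/-- Symmetrising the form gives a matrix with off-diagonal entries `c (|k - j|) / 2 ≤ 0` whose
`k`-th row sums to `(S k + S (n - 1 - k)) / 2`, where `S M = ∑ m ≤ M, c m`; a symmetric matrix
with nonpositive off-diagonal entries and nonnegative row sums is positive semidefinite. -/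
theorem lowerToeplitzForm_nonneg {c : ℕ → R} (hc : ∀ m, c (m + 1) ≤ 0)
    (hsum : ∀ M, 0 ≤ ∑ m ∈ range (M + 1), c m) (n : ℕ) (u : ℕ → R) :
    0 ≤ lowerToeplitzForm c n u := by
  have hoff : ∀ k, ∀ j ∈ range k,
      c (k - j) * (u j ^ 2 + u k ^ 2) ≤ 2 * (u k * (c (k - j) * u j)) := fun k j hj ↦ by
    obtain ⟨m, hm⟩ : ∃ m, k - j = m + 1 := ⟨k - j - 1, by have := mem_range.mp hj; omega⟩
    rw [hm]
    nlinarith [hc m, sq_nonneg (u j - u k)]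
  suffices 0 ≤ 2 * lowerToeplitzForm c n u by linarith
  calc 0 ≤ ∑ k ∈ range n,
          u k ^ 2 * (∑ m ∈ range (k + 1), c m + ∑ m ∈ range (n - 1 - k + 1), c m) :=
        sum_nonneg fun k _ ↦ mul_nonneg (sq_nonneg _) (add_nonneg (hsum k) (hsum _))
    _ = ∑ k ∈ range n,
          (2 * c 0 * u k ^ 2 + ∑ j ∈ range k, c (k - j) * (u j ^ 2 + u k ^ 2)) := by
        rw [sum_add_distrib, sum_range_sum_range_sub_mul_sq_add_sq, ← sum_add_distrib]
        simp only [sum_range_succ']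
        exact sum_congr rfl fun k _ ↦ by ring
    _ ≤ ∑ k ∈ range n,
          (2 * c 0 * u k ^ 2 + ∑ j ∈ range k, 2 * (u k * (c (k - j) * u j))) :=
        sum_le_sum fun k _ ↦ add_le_add_right (sum_le_sum (hoff k)) _
    _ = 2 * lowerToeplitzForm c n u := by
        rw [lowerToeplitzForm, mul_sum]
        refine sum_congr rfl fun k _ ↦ ?_
        simp only [sum_range_succ, Nat.sub_self, mul_add, mul_sum]
        ring

end ToeplitzForm

theorem Ring.choose_eq_prod_range_div {K : Type*} [Field K] [CharZero K] (r : K) (k : ℕ) :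
    Ring.choose r k = (∏ i ∈ range k, (r - i)) / k.factorial := by
  rw [Ring.choose_eq_smul, ← Polynomial.eval₂_smulOneHom_eq_smeval, ← Polynomial.eval_map]
  simp [descPochhammer_map, descPochhammer_eval_eq_prod_range, div_eq_inv_mul]

theorem mk_omegaBD (γ : ℝ) : mk (omegaBD γ) = rescale (-1) (binomialSeries ℝ γ) := by
  ext k
  simp [omegaBD, coeff_rescale, Ring.choose_eq_prod_range_div]

theorem mk_omegaBD_add (a b : ℝ) : mk (omegaBD (a + b)) = mk (omegaBD a) * mk (omegaBD b) := by
  simp only [mk_omegaBD, binomialSeries_add, map_mul]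

theorem mk_omegaBD_mul_mk_omegaBD_neg (γ : ℝ) : mk (omegaBD γ) * mk (omegaBD (-γ)) = 1 := by
  rw [← mk_omegaBD_add, add_neg_cancel, mk_omegaBD, binomialSeries_zero, map_one]

theorem omegaBD_eq_prod_div (γ : ℝ) (k : ℕ) :
    omegaBD γ k = (∏ i ∈ range k, ((i : ℝ) - γ)) / k.factorial := by
  simp_rw [show ∀ i : ℕ, (i : ℝ) - γ = -(γ - i) from fun i ↦ by ring]
  rw [prod_neg, card_range, omegaBD, mul_div_assoc]

theorem omegaBD_neg_one (k : ℕ) : omegaBD (-1) k = 1 := by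
  rw [omegaBD_eq_prod_div, div_eq_one_iff_eq (by positivity)]
  simp_rw [sub_neg_eq_add]
  exact_mod_cast prod_range_add_one_eq_factorial k

theorem omegaBD_nonneg {γ : ℝ} (hγ : γ ≤ 0) (k : ℕ) : 0 ≤ omegaBD γ k := by
  rw [omegaBD_eq_prod_div]
  exact div_nonneg (prod_nonneg fun i _ ↦ by linarith [i.cast_nonneg (α := ℝ)])
    k.factorial.cast_nonneg

theorem omegaBD_succ (γ : ℝ) (k : ℕ) :
    omegaBD γ (k + 1) = -γ / (k + 1) * omegaBD (γ - 1) k := by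
  rw [omegaBD_eq_prod_div, omegaBD_eq_prod_div, prod_range_succ', Nat.factorial_succ]
  push_cast
  field_simp
  simp_rw [sub_sub_eq_add_sub]
  ring

theorem omegaBD_succ_nonpos {γ : ℝ} (h0 : 0 ≤ γ) (h1 : γ ≤ 1) (k : ℕ) :
    omegaBD γ (k + 1) ≤ 0 := by
  rw [omegaBD_succ]
  exact mul_nonpos_of_nonpos_of_nonneg
    (div_nonpos_of_nonpos_of_nonneg (by linarith) (by positivity)) (omegaBD_nonneg (by linarith) k)

theorem sum_range_succ_omegaBD (γ : ℝ) (M : ℕ) :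
    ∑ m ∈ range (M + 1), omegaBD γ m = omegaBD (γ - 1) M := by
  have := sum_range_succ_sub_mul_eq_coeff_mk_mul (omegaBD (-1)) (omegaBD γ) M
  simp only [omegaBD_neg_one, one_mul] at this
  rw [this, ← mk_omegaBD_add, neg_add_eq_sub, coeff_mk]

theorem lowerToeplitzForm_omegaBD_nonneg {γ : ℝ} (h0 : 0 ≤ γ) (h1 : γ ≤ 1) (n : ℕ)
    (u : ℕ → ℝ) :
    0 ≤ lowerToeplitzForm (omegaBD γ) n u :=
  lowerToeplitzForm_nonneg (omegaBD_succ_nonpos h0 h1)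
    (fun M ↦ (sum_range_succ_omegaBD γ M).symm ▸ omegaBD_nonneg (by linarith) M) n u

theorem toeplitz_psd_general (γ : ℝ) (hγ : -1 < γ ∧ γ < 1) (n : ℕ) (u : ℕ → ℝ) :
    0 ≤ ∑ k ∈ Finset.range n, u k * ∑ j ∈ Finset.range (k + 1), omegaBD γ (k - j) * u j := by
  change 0 ≤ lowerToeplitzForm (omegaBD γ) n u
  obtain ⟨hlo, hhi⟩ := hγ
  rcases le_total 0 γ with hγ | hγ
  · exact lowerToeplitzForm_omegaBD_nonneg hγ hhi.le n u
  · rw [lowerToeplitzForm_eq_of_mk_mul_mk_eq_one (mk_omegaBD_mul_mk_omegaBD_neg γ)]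
    exact lowerToeplitzForm_omegaBD_nonneg (by linarith) (by linarith) n _

/-- Positive semidefiniteness of the lower-triangular Toeplitz quadratic form generated
by the coefficients of `(1-x)^γ`, `γ ∈ (-1,1)`. -/
theorem toeplitz_psd (γ : ℝ) (hγ : -1 < γ ∧ γ < 1) (n : ℕ) (hn : 1 ≤ n) (u : ℕ → ℝ) :
    0 ≤ ∑ k ∈ Finset.range n, u k * ∑ j ∈ Finset.range (k + 1), omegaBD γ (k - j) * u j :=
  toeplitz_psd_general γ hγ n u
end

section
/- Summability of FBDF weights for positive order: for $0 < \gamma < 1$, the coefficients of $\omega^{(\gamma)}(x) = ((3/2) - 2x + x^2/2)^{\gamma}$ satisfy $\omega_k^{(\gamma)} = O(k^{-\gamma-1})$ as $k \to \infty$; in particular $\sum_{k=0}^{\infty} |\omega_k^{(\gamma)}| < \infty$. -/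
/-!
Near `0`, `3/2 - 2x + x²/2 = (1 - x)(3 - x)/2`, so by the Leibniz rule the Taylor coefficients of
`ω^(γ)` are, up to the factor `2^(-γ)`, the Cauchy product of `(-1)^i (γ choose i)` and
`(-1)^j (γ choose j) 3^(γ - j)`. For `0 ≤ γ ≤ 1` we have `|γ choose n| ≤ 1`, and
`1 - t ≤ exp (-t)` together with `log (n + 1) ≤ H_n` gives `|γ choose n| ≤ γ n^(-γ-1)`.
Convolving a nonnegative `O(n^(-s))` sequence with a geometric one keeps it `O(k^(-s))`: the terms
with `i ≥ k/2` contribute `O(k^(-s))`, the remaining ones are exponentially small.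
-/

/-- Taylor coefficients of the FBDF generating function
`ω^(γ)(x) = (3/2 - 2x + x²/2)^γ` at `x = 0`. -/
noncomputable def fbdfCoeff (γ : ℝ) (k : ℕ) : ℝ :=
  iteratedDeriv k (fun x : ℝ => (3 / 2 - 2 * x + x ^ 2 / 2) ^ γ) 0 / Nat.factorial k

open Finset

theorem prod_one_sub_div_add_one_le_rpow {γ : ℝ} (hγ0 : 0 ≤ γ) (hγ1 : γ ≤ 1) (m : ℕ) :
    ∏ j ∈ range m, (1 - γ / (j + 1)) ≤ ((m : ℝ) + 1) ^ (-γ) := by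
  calc ∏ j ∈ range m, (1 - γ / (j + 1))
      ≤ ∏ j ∈ range m, Real.exp (-(γ / (j + 1))) := by
        refine prod_le_prod (fun j _ => ?_) fun j _ => ?_
        · rw [sub_nonneg, div_le_one (by positivity)]
          linarith [(j.cast_nonneg : (0 : ℝ) ≤ j)]
        · linarith [Real.add_one_le_exp (-(γ / (j + 1)))]
    _ = Real.exp (-(γ * harmonic m)) := by
        rw [← Real.exp_sum, harmonic, Rat.cast_sum, mul_sum, ← sum_neg_distrib]
        push_cast
        simp only [div_eq_mul_inv]
    _ ≤ Real.exp (-(γ * Real.log ((m : ℝ) + 1))) := by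
        gcongr
        exact_mod_cast log_add_one_le_harmonic m
    _ = ((m : ℝ) + 1) ^ (-γ) := by
        rw [Real.rpow_def_of_pos (by positivity)]
        ring_nf

namespace Ring

theorem choose_eq_prod_div (γ : ℝ) (n : ℕ) :
    Ring.choose γ n = (∏ j ∈ range n, (γ - j)) / n.factorial := by
  rw [Ring.choose_eq_smul, ← Polynomial.aeval_eq_smeval, Polynomial.aeval_def,
    ← Polynomial.eval_map, descPochhammer_map, descPochhammer_eval_eq_prod_range, smul_eq_mul,
    div_eq_inv_mul]

theorem abs_choose_le_one {γ : ℝ} (hγ0 : -1 ≤ γ) (hγ1 : γ ≤ 1) (n : ℕ) :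
    |Ring.choose γ n| ≤ 1 := by
  rw [choose_eq_prod_div, abs_div, Nat.abs_cast, div_le_one (by positivity), abs_prod,
    ← prod_range_add_one_eq_factorial, Nat.cast_prod]
  refine prod_le_prod (fun _ _ => abs_nonneg _) fun j _ => abs_le.2 ⟨?_, ?_⟩ <;>
    push_cast <;> linarith [(j.cast_nonneg : (0 : ℝ) ≤ j)]

theorem choose_succ_eq_mul_prod (γ : ℝ) (m : ℕ) :
    Ring.choose γ (m + 1) = (-1) ^ m * γ / (m + 1) * ∏ j ∈ range m, (1 - γ / (j + 1)) := by
  have hsplit : ∀ j ∈ range m, γ - ((j + 1 : ℕ) : ℝ) = -1 * ((j + 1) * (1 - γ / (j + 1))) := by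
    intro j _
    push_cast
    field_simp
    ring
  rw [choose_eq_prod_div, prod_range_succ', prod_congr rfl hsplit, prod_mul_distrib,
    prod_mul_distrib, prod_const, card_range, Nat.factorial_succ,
    ← prod_range_add_one_eq_factorial]
  push_cast
  field_simp
  ring

theorem abs_choose_le_rpow {γ : ℝ} (hγ0 : 0 ≤ γ) (hγ1 : γ ≤ 1) {n : ℕ} (hn : n ≠ 0) :
    |Ring.choose γ n| ≤ γ * (n : ℝ) ^ (-γ - 1) := by
  obtain ⟨m, rfl⟩ := Nat.exists_eq_succ_of_ne_zero hn
  have hprod : 0 ≤ ∏ j ∈ range m, (1 - γ / (j + 1)) := prod_nonneg fun j _ => by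
    rw [sub_nonneg, div_le_one (by positivity)]
    linarith [(j.cast_nonneg : (0 : ℝ) ≤ j)]
  rw [choose_succ_eq_mul_prod, abs_mul, abs_of_nonneg hprod, abs_div, abs_mul, abs_pow, abs_neg,
    abs_one, one_pow, one_mul, abs_of_nonneg hγ0, Nat.cast_succ,
    abs_of_pos (by positivity), Real.rpow_sub_one (by positivity), div_mul_eq_mul_div,
    mul_div_assoc]
  gcongr
  exact prod_one_sub_div_add_one_le_rpow hγ0 hγ1 m

end Ring

theorem iteratedDeriv_mul_div_factorial {𝕜 : Type*} [NontriviallyNormedField 𝕜] [CharZero 𝕜]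
    {f g : 𝕜 → 𝕜} {x : 𝕜} {n : ℕ} (hf : ContDiffAt 𝕜 n f x) (hg : ContDiffAt 𝕜 n g x) :
    iteratedDeriv n (f * g) x / n.factorial = ∑ i ∈ range (n + 1),
      iteratedDeriv i f x / i.factorial * (iteratedDeriv (n - i) g x / (n - i).factorial) := by
  rw [iteratedDeriv_mul hf hg, sum_div]
  refine sum_congr rfl fun i hi => ?_
  rw [Nat.cast_choose 𝕜 (Nat.le_of_lt_succ (mem_range.1 hi))]
  have := (Nat.cast_ne_zero (R := 𝕜)).2 n.factorial_ne_zero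
  field_simp

theorem iteratedDeriv_const_sub_rpow (s γ : ℝ) (n : ℕ) :
    iteratedDeriv n (fun z : ℝ => (s - z) ^ γ) =
      fun t => (-1) ^ n * (descPochhammer ℝ n).eval γ * (s - t) ^ (γ - n) := by
  rw [iteratedDeriv_comp_const_sub n (fun x : ℝ => x ^ γ) s, iteratedDeriv_eq_iterate]
  ext t
  rw [Real.iter_deriv_rpow_const, smul_eq_mul, mul_assoc]

theorem iteratedDeriv_const_sub_rpow_zero_div_factorial (s γ : ℝ) (n : ℕ) :
    iteratedDeriv n (fun z : ℝ => (s - z) ^ γ) 0 / n.factorial =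
      (-1) ^ n * Ring.choose γ n * s ^ (γ - n) := by
  simp only [iteratedDeriv_const_sub_rpow, Ring.choose_eq_prod_div,
    ← descPochhammer_eval_eq_prod_range, sub_zero]
  ring

theorem contDiffAt_const_sub_rpow {s : ℝ} (hs : 0 < s) (γ : ℝ) (n : ℕ) :
    ContDiffAt ℝ n (fun z : ℝ => (s - z) ^ γ) 0 :=
  (contDiffAt_const.sub contDiffAt_id).rpow_const_of_ne (by simpa using hs.ne')

theorem fbdfCoeff_eq (γ : ℝ) (k : ℕ) :
    fbdfCoeff γ k = (1 / 2) ^ γ * ∑ i ∈ range (k + 1), (-1) ^ i * Ring.choose γ i *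
      ((-1) ^ (k - i) * Ring.choose γ (k - i) * 3 ^ (γ - (k - i : ℕ))) := by
  have hfactor : (fun x : ℝ => (3 / 2 - 2 * x + x ^ 2 / 2) ^ γ) =ᶠ[nhds 0]
      fun x => (1 / 2) ^ γ * ((fun z : ℝ => (1 - z) ^ γ) * fun z : ℝ => (3 - z) ^ γ) x := by
    filter_upwards [Iio_mem_nhds (zero_lt_one' ℝ)] with x hx
    have h1 : 0 ≤ 1 - x := by linarith [Set.mem_Iio.1 hx]
    have h3 : 0 ≤ 3 - x := by linarith [Set.mem_Iio.1 hx]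
    rw [Pi.mul_apply, ← Real.mul_rpow h1 h3, ← Real.mul_rpow (by norm_num) (mul_nonneg h1 h3)]
    ring_nf
  rw [fbdfCoeff, hfactor.iteratedDeriv_eq, iteratedDeriv_const_mul_field, mul_div_assoc,
    iteratedDeriv_mul_div_factorial (contDiffAt_const_sub_rpow one_pos γ k)
      (contDiffAt_const_sub_rpow three_pos γ k)]
  simp only [iteratedDeriv_const_sub_rpow_zero_div_factorial, Real.one_rpow, mul_one]

theorem abs_fbdfCoeff_le {γ : ℝ} (hγ0 : -1 ≤ γ) (hγ1 : γ ≤ 1) (k : ℕ) :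
    |fbdfCoeff γ k| ≤ (3 / 2) ^ γ * ∑ i ∈ range (k + 1), |Ring.choose γ i| * (1 / 3) ^ (k - i) := by
  have hterm : ∀ i ∈ range (k + 1), |(-1) ^ i * Ring.choose γ i *
      ((-1) ^ (k - i) * Ring.choose γ (k - i) * 3 ^ (γ - (k - i : ℕ)))|
        ≤ 3 ^ γ * (|Ring.choose γ i| * (1 / 3) ^ (k - i)) := fun i _ => by
    have h3 : (3 : ℝ) ^ (γ - (k - i : ℕ)) = 3 ^ γ * (1 / 3) ^ (k - i) := by
      rw [Real.rpow_sub three_pos, Real.rpow_natCast, one_div_pow, mul_one_div]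
    simp only [abs_mul, abs_pow, abs_neg, abs_one, one_pow, one_mul, h3,
      abs_of_pos (by positivity : (0 : ℝ) < 3 ^ γ * (1 / 3) ^ (k - i))]
    have := Ring.abs_choose_le_one hγ0 hγ1 (k - i)
    have : 0 ≤ |Ring.choose γ i| * (3 ^ γ * (1 / 3) ^ (k - i)) := by positivity
    nlinarith
  rw [fbdfCoeff_eq, abs_mul, abs_of_pos (by positivity)]
  calc (1 / 2) ^ γ * |∑ i ∈ range (k + 1), (-1) ^ i * Ring.choose γ i *
        ((-1) ^ (k - i) * Ring.choose γ (k - i) * 3 ^ (γ - (k - i : ℕ)))|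
      ≤ (1 / 2) ^ γ * ∑ i ∈ range (k + 1), 3 ^ γ * (|Ring.choose γ i| * (1 / 3) ^ (k - i)) := by
        gcongr
        exact (abs_sum_le_sum_abs _ _).trans (sum_le_sum hterm)
    _ = (3 / 2) ^ γ * ∑ i ∈ range (k + 1), |Ring.choose γ i| * (1 / 3) ^ (k - i) := by
        rw [← mul_sum, ← mul_assoc, ← Real.mul_rpow (by norm_num) (by norm_num)]
        norm_num

theorem exists_nat_mul_pow_le_rpow {θ : ℝ} (hθ0 : 0 ≤ θ) (hθ1 : θ < 1) (s : ℝ) :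
    ∃ M, 0 ≤ M ∧ ∀ k : ℕ, k ≠ 0 → k * θ ^ k ≤ M * (k : ℝ) ^ (-s) := by
  obtain ⟨M, hM⟩ := (tendsto_pow_const_mul_const_pow_of_lt_one (⌈s⌉₊ + 1) hθ0 hθ1).bddAbove_range
  refine ⟨M, le_trans (by positivity) (hM ⟨1, rfl⟩), fun k hk => ?_⟩
  have hk1 : (1 : ℝ) ≤ k := Nat.one_le_cast.2 (Nat.one_le_iff_ne_zero.2 hk)
  have hpow : (k : ℝ) ^ (s + 1) ≤ (k : ℝ) ^ (⌈s⌉₊ + 1) := by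
    rw [← Real.rpow_natCast]
    exact Real.rpow_le_rpow_of_exponent_le hk1 (by push_cast; linarith [Nat.le_ceil s])
  calc (k : ℝ) * θ ^ k = (k : ℝ) ^ (s + 1) * θ ^ k * (k : ℝ) ^ (-s) := by
        rw [Real.rpow_add (by positivity), Real.rpow_one, Real.rpow_neg (by positivity)]
        field_simp
    _ ≤ (k : ℝ) ^ (⌈s⌉₊ + 1) * θ ^ k * (k : ℝ) ^ (-s) := by gcongr
    _ ≤ M * (k : ℝ) ^ (-s) := by
        gcongr
        exact hM ⟨k, rfl⟩

theorem geom_sum_range_reflect_le {r : ℝ} (hr0 : 0 ≤ r) (hr1 : r < 1) (k : ℕ) :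
    ∑ i ∈ range (k + 1), r ^ (k - i) ≤ (1 - r)⁻¹ := by
  calc ∑ i ∈ range (k + 1), r ^ (k - i) = ∑ i ∈ Ico 0 (k + 1), r ^ i := by
        rw [← range_eq_Ico, ← sum_range_reflect]
        exact sum_congr rfl fun i hi => by
          rw [add_tsub_cancel_right, Nat.sub_sub_self (Nat.lt_succ_iff.1 (mem_range.1 hi))]
    _ ≤ (1 - r)⁻¹ := by simpa using geom_sum_Ico_le_of_lt_one hr0 hr1 (m := 0) (n := k + 1)

theorem rpow_neg_le_of_le_two_mul {s : ℝ} (hs : 0 ≤ s) {i k : ℕ} (hk : k ≠ 0)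
    (hik : k ≤ 2 * i) : (i : ℝ) ^ (-s) ≤ 2 ^ s * (k : ℝ) ^ (-s) := by
  have hki : (k : ℝ) / 2 ≤ i := by
    rw [div_le_iff₀ two_pos]
    exact_mod_cast (by omega : k ≤ i * 2)
  calc (i : ℝ) ^ (-s) ≤ ((k : ℝ) / 2) ^ (-s) :=
        Real.rpow_le_rpow_of_nonpos (by positivity) hki (by linarith)
    _ = 2 ^ s * (k : ℝ) ^ (-s) := by
        rw [Real.div_rpow (by positivity) zero_le_two, Real.rpow_neg zero_le_two, div_inv_eq_mul,
          mul_comm]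

theorem pow_sub_le_sqrt_pow {r : ℝ} (hr0 : 0 ≤ r) (hr1 : r ≤ 1) {i k : ℕ} (hik : 2 * i ≤ k) :
    r ^ (k - i) ≤ √r ^ k := by
  rw [← Real.sq_sqrt hr0, ← pow_mul, Real.sqrt_sq (Real.sqrt_nonneg r)]
  exact pow_le_pow_of_le_one (Real.sqrt_nonneg r) (Real.sqrt_le_one.2 hr1) (by omega)

theorem exists_sum_mul_pow_le_rpow {a : ℕ → ℝ} {A B s r : ℝ} (hs : 0 ≤ s) (hr0 : 0 ≤ r)
    (hr1 : r < 1) (ha0 : ∀ n, 0 ≤ a n) (haB : ∀ n, a n ≤ B)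
    (haA : ∀ n, n ≠ 0 → a n ≤ A * (n : ℝ) ^ (-s)) :
    ∃ C, 0 < C ∧ ∀ k, k ≠ 0 → ∑ i ∈ range (k + 1), a i * r ^ (k - i) ≤ C * (k : ℝ) ^ (-s) := by
  obtain ⟨M, hM0, hM⟩ := exists_nat_mul_pow_le_rpow (Real.sqrt_nonneg r)
    ((Real.sqrt_lt' one_pos).2 (by simpa using hr1)) s
  have hB : 0 ≤ B := (ha0 0).trans (haB 0)
  have hA : 0 ≤ A := by simpa using (ha0 1).trans (haA 1 one_ne_zero)
  refine ⟨2 * B * M + A * 2 ^ s * (1 - r)⁻¹ + 1, by have := sub_pos.2 hr1; positivity,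
    fun k hk => ?_⟩
  set D := A * 2 ^ s * (k : ℝ) ^ (-s)
  have hterm : ∀ i ∈ range (k + 1), a i * r ^ (k - i) ≤ B * √r ^ k + D * r ^ (k - i) := by
    intro i _
    have hsmall : 0 ≤ B * √r ^ k := by positivity
    have hlarge : 0 ≤ D * r ^ (k - i) := by positivity
    by_cases hik : 2 * i < k
    · have : a i * r ^ (k - i) ≤ B * √r ^ k :=
        mul_le_mul (haB i) (pow_sub_le_sqrt_pow hr0 hr1.le hik.le) (by positivity) hB
      linarith
    · have hai : a i ≤ D := (haA i (by omega)).trans <|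
        (mul_le_mul_of_nonneg_left (rpow_neg_le_of_le_two_mul hs hk (by omega)) hA).trans_eq
          (mul_assoc _ _ _).symm
      have : a i * r ^ (k - i) ≤ D * r ^ (k - i) := by gcongr
      linarith
  have hk1 : (1 : ℝ) ≤ k := Nat.one_le_cast.2 (Nat.one_le_iff_ne_zero.2 hk)
  have hks : 0 < (k : ℝ) ^ (-s) := by positivity
  have hθk : ((k : ℝ) + 1) * B * √r ^ k ≤ 2 * B * (M * (k : ℝ) ^ (-s)) := by
    nlinarith [hM k hk, mul_nonneg hB (pow_nonneg (Real.sqrt_nonneg r) k)]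
  calc ∑ i ∈ range (k + 1), a i * r ^ (k - i)
      ≤ ∑ i ∈ range (k + 1), (B * √r ^ k + D * r ^ (k - i)) := sum_le_sum hterm
    _ = ((k : ℝ) + 1) * B * √r ^ k + D * ∑ i ∈ range (k + 1), r ^ (k - i) := by
        rw [sum_add_distrib, sum_const, card_range, nsmul_eq_mul, mul_sum]
        push_cast
        ring
    _ ≤ 2 * B * (M * (k : ℝ) ^ (-s)) + D * (1 - r)⁻¹ :=
        add_le_add hθk (by gcongr; exact geom_sum_range_reflect_le hr0 hr1 k)
    _ ≤ (2 * B * M + A * 2 ^ s * (1 - r)⁻¹ + 1) * (k : ℝ) ^ (-s) := by nlinarith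

/-- Summability of FBDF weights for positive order: for `0 < γ < 1`,
`ω_k^{(γ)} = O(k^{-γ-1})`; in particular `∑ |ω_k^{(γ)}| < ∞`. -/
theorem fbdf_weights_summable (γ : ℝ) (hγ : 0 < γ ∧ γ < 1) :
    (∃ C : ℝ, 0 < C ∧ ∀ k : ℕ, 1 ≤ k → |fbdfCoeff γ k| ≤ C * (k : ℝ) ^ (-γ - 1)) ∧
    Summable (fun k : ℕ => |fbdfCoeff γ k|) := by
  obtain ⟨hγ0, hγ1⟩ := hγ
  obtain ⟨C, hC0, hC⟩ := exists_sum_mul_pow_le_rpow (a := fun i => |Ring.choose γ i|)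
    (s := γ + 1) (r := 1 / 3) (by linarith) (by norm_num) (by norm_num) (fun _ => abs_nonneg _)
    (Ring.abs_choose_le_one (by linarith) hγ1.le)
    (fun n hn => by simpa only [neg_add'] using Ring.abs_choose_le_rpow hγ0.le hγ1.le hn)
  have hbound : ∀ k : ℕ, 1 ≤ k → |fbdfCoeff γ k| ≤ (3 / 2) ^ γ * C * (k : ℝ) ^ (-γ - 1) := by
    intro k hk
    rw [mul_assoc, ← neg_add']
    exact (abs_fbdfCoeff_le (by linarith) hγ1.le k).trans
      (mul_le_mul_of_nonneg_left (hC k (by omega)) (by positivity))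
  refine ⟨⟨(3 / 2) ^ γ * C, by positivity, hbound⟩, ?_⟩
  refine .of_norm_bounded_eventually_nat
    (((Real.summable_nat_rpow (p := -γ - 1)).2 (by linarith)).mul_left ((3 / 2) ^ γ * C)) ?_
  filter_upwards [Filter.eventually_ge_atTop 1] with k hk
  simpa only [Real.norm_eq_abs, abs_abs] using hbound k hk
end
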